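/- arXiv:2209.06268 — 2 statements merged into one kernel-verified Lean document; each statement's English description precedes it below -/
import Mathlib

section
/- Let n ≥ 2 and let k, l be integers with 0 ≤ l < k ≤ n. Let λ ∈ ℝⁿ lie in the Gårding cone Γ_k and suppose S_k(λ)/C_n^k = S_l(λ)/C_n^l. Then (i) k (n−l+1) C_n^k S_{l−1}(λ) ≤ l (n−k+1) C_n^l S_{k−1}(λ), where S_{−1}(λ) := 0, and (ii) k S_k(λ) ≤ (n−k+1) S_{k−1}(λ). -/
/-!
Put `p_j = S_j(λ) / C_n^j`. Newton's inequalities `p_j p_{j+2} ≤ p_{j+1}²` hold for every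
`λ ∈ ℝⁿ`. By Rolle's theorem the roots of the derivative of `∏ (X - λ_i)` are real, and they have
the same `p_j`; so the number of variables can be cut down to `j + 2`. Replacing the variables by
their inverses then turns the inequality into `p_0 p_2 ≤ p_1²`, and a second reduction leaves two
variables, where it is `ab ≤ ((a + b)/2)²`.

On `Γ_k` the sequence `p_0, …, p_k` is therefore positive and log-concave: an increase at one step
forces increases at all earlier steps, a decrease forces decreases at all later ones. As
`p_l = p_k`, this gives `p_{l-1} ≤ p_l = p_k ≤ p_{k-1}`, which are (i) and (ii) once the binomial
coefficients are cleared with `j C_n^j = (n - j + 1) C_n^{j-1}`.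
-/

open scoped BigOperators

noncomputable section

/-- The k-th elementary symmetric polynomial of `λ ∈ ℝⁿ`; by definition
`Svec n m λ = 0` for `m > n` and `Svec n 0 λ = 1`. -/
def Svec (n k : ℕ) (lam : Fin n → ℝ) : ℝ :=
  ∑ s ∈ Finset.powersetCard k (Finset.univ : Finset (Fin n)), ∏ i ∈ s, lam i

/-- Integer-indexed version, with the convention `S_m = 0` for `m < 0`. -/
def SvecZ (n : ℕ) (k : ℤ) (lam : Fin n → ℝ) : ℝ :=
  if 0 ≤ k then Svec n k.toNat lam else 0

/-- The Gårding cone `Γ_k = {λ : S_1(λ) > 0, …, S_k(λ) > 0}`. -/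
def GardingCone (n k : ℕ) : Set (Fin n → ℝ) :=
  {lam | ∀ i : ℕ, 1 ≤ i → i ≤ k → 0 < Svec n i lam}

open Polynomial

namespace Multiset

section CommSemiring

variable {R : Type*} [CommSemiring R]

theorem esymm_zero (s : Multiset R) : s.esymm 0 = 1 := by
  simp [esymm]

theorem esymm_cons_succ (a : R) (s : Multiset R) (j : ℕ) :
    (a ::ₘ s).esymm (j + 1) = s.esymm (j + 1) + a * s.esymm j := by
  simp only [esymm, powersetCard_cons, map_add, sum_add, map_map, Function.comp_def, prod_cons,
    sum_map_mul_left]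

theorem esymm_eq_zero_of_card_lt {s : Multiset R} {j : ℕ} (h : card s < j) : s.esymm j = 0 := by
  simp [esymm, powersetCard_eq_empty _ h]

theorem esymm_card (s : Multiset R) : s.esymm (card s) = s.prod := by
  simp [esymm, powersetCard_self]

end CommSemiring

theorem prod_mul_esymm_map_inv {K : Type*} [Field K] {s : Multiset K} (h0 : (0 : K) ∉ s) {i j : ℕ}
    (hij : i + j = card s) : s.prod * (s.map (·⁻¹)).esymm j = s.esymm i := by
  induction s using Multiset.induction generalizing i j with
  | empty =>
    obtain ⟨rfl, rfl⟩ : i = 0 ∧ j = 0 := by simpa using hij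
    simp [esymm_zero]
  | cons a s ih =>
    have ha : a ≠ 0 := fun h => h0 (h ▸ mem_cons_self a s)
    have h0s : (0 : K) ∉ s := fun h => h0 (mem_cons_of_mem h)
    rw [card_cons] at hij
    rcases j with _ | j
    · obtain rfl : i = card (a ::ₘ s) := by simpa using hij
      rw [esymm_zero, mul_one, esymm_card]
    rw [map_cons, prod_cons, esymm_cons_succ]
    rcases i with _ | i
    · have hj : j = card s := by omega
      rw [esymm_eq_zero_of_card_lt (by simp; omega), hj, ← card_map (·⁻¹) s, esymm_card,
        prod_map_inv', esymm_zero]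
      have := prod_ne_zero h0s
      field_simp
      ring
    · rw [esymm_cons_succ, ← ih h0s (i := i) (j := j + 1) (by omega),
        ← ih h0s (i := i + 1) (j := j) (by omega)]
      field_simp
      ring

-- The paper's `S_j / C_n^j`, for the multiset of the `λ_i`.
def esymmMean (s : Multiset ℝ) (j : ℕ) : ℝ :=
  s.esymm j / (card s).choose j

theorem esymmMean_zero (s : Multiset ℝ) : s.esymmMean 0 = 1 := by
  simp [esymmMean, esymm_zero]

theorem exists_card_eq_esymmMean_eq_of_card_eq_succ {s : Multiset ℝ} {N : ℕ}
    (hs : card s = N + 1) :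
    ∃ r : Multiset ℝ, card r = N ∧ ∀ j ≤ N, r.esymmMean j = s.esymmMean j := by
  set f : ℝ[X] := (s.map fun a => X - C a).prod
  have hf : f.natDegree = N + 1 := by rw [natDegree_multiset_prod_X_sub_C_eq_card, hs]
  have hf' : card f.roots = N + 1 := by rw [roots_multiset_prod_X_sub_C, hs]
  -- Rolle: `f'` has at least `N` real roots, counted with multiplicity, and degree at most `N`.
  have hr : card (derivative f).roots = N ∧ (derivative f).natDegree = N := by
    have := card_roots_le_derivative f
    have := natDegree_derivative_le f
    have := card_roots' (derivative f)
    omega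
  have vieta : ∀ j ≤ N,
      (derivative f).leadingCoeff * (derivative f).roots.esymm j =
        s.esymm j * ((N - j : ℕ) + 1 : ℝ) := by
    intro j hj
    have hd := coeff_eq_esymm_roots_of_card (hr.1.trans hr.2.symm) (k := N - j) (by omega)
    rw [coeff_derivative, prod_X_sub_C_coeff s (by omega), hr.2, hs,
      show N + 1 - (N - j + 1) = j by omega, show N - (N - j) = j by omega] at hd
    refine mul_left_cancel₀ (pow_ne_zero j (neg_ne_zero.2 one_ne_zero) : (-1 : ℝ) ^ j ≠ 0) ?_
    linear_combination -hd
  have hlead : (derivative f).leadingCoeff = N + 1 := by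
    simpa [esymm_zero] using vieta 0 (Nat.zero_le _)
  refine ⟨(derivative f).roots, hr.1, fun j hj => ?_⟩
  have hchoose : (N.choose j : ℝ) * (N + 1) = (N + 1).choose j * ((N - j : ℕ) + 1) := by
    have := Nat.choose_mul_succ_eq N j
    rw [show N + 1 - j = N - j + 1 by omega] at this
    exact_mod_cast this
  have hpos : (0 : ℝ) < N.choose j := by exact_mod_cast Nat.choose_pos hj
  have hpos' : (0 : ℝ) < (N + 1).choose j := by exact_mod_cast Nat.choose_pos (by omega)
  rw [esymmMean, esymmMean, hr.1, hs, div_eq_div_iff hpos.ne' hpos'.ne']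
  refine mul_left_cancel₀ (N.cast_add_one_ne_zero : (N + 1 : ℝ) ≠ 0) ?_
  rw [hlead] at vieta
  linear_combination ((N + 1).choose j : ℝ) * vieta j hj - s.esymm j * hchoose

theorem exists_card_eq_esymmMean_eq {s : Multiset ℝ} {m : ℕ} (hm : m ≤ card s) :
    ∃ r : Multiset ℝ, card r = m ∧ ∀ j ≤ m, r.esymmMean j = s.esymmMean j := by
  obtain ⟨d, hd⟩ := Nat.exists_eq_add_of_le hm
  clear hm
  induction d generalizing s with
  | zero => exact ⟨s, hd, fun _ _ => rfl⟩
  | succ d ih =>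
    obtain ⟨t, ht, hts⟩ := exists_card_eq_esymmMean_eq_of_card_eq_succ (N := m + d) hd
    obtain ⟨r, hr, hrt⟩ := ih ht
    exact ⟨r, hr, fun j hj => (hrt j hj).trans (hts j (by omega))⟩

theorem esymmMean_two_le_sq (s : Multiset ℝ) : s.esymmMean 2 ≤ s.esymmMean 1 ^ 2 := by
  rcases lt_or_ge (card s) 2 with hs | hs
  · rw [esymmMean, esymm_eq_zero_of_card_lt hs, zero_div]
    positivity
  obtain ⟨r, hr, hrs⟩ := exists_card_eq_esymmMean_eq hs
  obtain ⟨a, b, rfl⟩ := card_eq_two.1 hr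
  rw [← hrs 1 (by norm_num), ← hrs 2 le_rfl, esymmMean, esymmMean, hr]
  simp only [insert_eq_cons, esymm_pair_one, esymm_pair_two, Nat.choose_self,
    Nat.choose_one_right, Nat.cast_one, div_one, Nat.cast_ofNat]
  nlinarith [sq_nonneg (a - b)]

theorem esymmMean_mul_le_sq_of_card_eq {s : Multiset ℝ} {m : ℕ} (hs : card s = m + 2) :
    s.esymmMean m * s.esymmMean (m + 2) ≤ s.esymmMean (m + 1) ^ 2 := by
  by_cases h0 : (0 : ℝ) ∈ s
  · have : s.esymmMean (m + 2) = 0 := by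
      rw [esymmMean, ← hs, esymm_card, prod_eq_zero h0, zero_div]
    rw [this, mul_zero]
    positivity
  have dual : ∀ i j, i + j = m + 2 →
      s.prod * (s.map (·⁻¹)).esymmMean j = s.esymmMean i := fun i j hij => by
    rw [esymmMean, esymmMean, card_map, hs, Nat.choose_symm_of_eq_add hij.symm, mul_div_assoc',
      prod_mul_esymm_map_inv h0 (hij.trans hs.symm)]
  rw [← dual m 2 rfl, ← dual (m + 1) 1 (by ring), ← dual (m + 2) 0 rfl, esymmMean_zero]
  have := esymmMean_two_le_sq (s.map (·⁻¹))
  calc _ = s.prod ^ 2 * (s.map (·⁻¹)).esymmMean 2 := by ring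
    _ ≤ s.prod ^ 2 * (s.map (·⁻¹)).esymmMean 1 ^ 2 := by gcongr
    _ = _ := by ring

theorem esymmMean_mul_le_sq (s : Multiset ℝ) {m : ℕ} (hm : m + 2 ≤ card s) :
    s.esymmMean m * s.esymmMean (m + 2) ≤ s.esymmMean (m + 1) ^ 2 := by
  obtain ⟨r, hr, hrs⟩ := exists_card_eq_esymmMean_eq hm
  rw [← hrs m (by omega), ← hrs (m + 1) (by omega), ← hrs (m + 2) le_rfl]
  exact esymmMean_mul_le_sq_of_card_eq hr

end Multiset

open Multiset

section LogConcave

variable {p : ℕ → ℝ} {N : ℕ}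

theorem lt_succ_of_logConcave_of_lt_succ (hpos : ∀ j ≤ N, 0 < p j)
    (hlc : ∀ j, j + 2 ≤ N → p j * p (j + 2) ≤ p (j + 1) ^ 2) {i j : ℕ} (hji : j ≤ i)
    (hiN : i + 1 ≤ N) (h : p i < p (i + 1)) : p j < p (j + 1) := by
  induction hji using Nat.decreasingInduction with
  | self => exact h
  | of_succ j hj ih =>
    nlinarith [hlc j (by omega), hpos (j + 1) (by omega), hpos (j + 2) (by omega)]

theorem succ_lt_of_logConcave_of_succ_lt (hpos : ∀ j ≤ N, 0 < p j)
    (hlc : ∀ j, j + 2 ≤ N → p j * p (j + 2) ≤ p (j + 1) ^ 2) {i j : ℕ} (hij : i ≤ j)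
    (hjN : j + 1 ≤ N) (h : p (i + 1) < p i) : p (j + 1) < p j := by
  induction j, hij using Nat.le_induction with
  | base => exact h
  | succ j hij ih =>
    nlinarith [ih (by omega), hlc j (by omega), hpos j (by omega), hpos (j + 1) (by omega)]

theorem le_pred_of_logConcave_of_eq (hpos : ∀ j ≤ N, 0 < p j)
    (hlc : ∀ j, j + 2 ≤ N → p j * p (j + 2) ≤ p (j + 1) ^ 2) {l k : ℕ} (hlk : l < k)
    (hkN : k ≤ N) (heq : p l = p k) : p k ≤ p (k - 1) := by
  obtain ⟨k, rfl⟩ : ∃ k', k = k' + 1 := ⟨k - 1, by omega⟩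
  by_contra! h
  have hmono : StrictMonoOn p (Set.Iic (k + 1)) := strictMonoOn_Iic_of_lt_succ fun m hm =>
    lt_succ_of_logConcave_of_lt_succ hpos hlc (Nat.lt_succ_iff.1 hm) hkN h
  exact (hmono (Set.mem_Iic.2 hlk.le) (Set.mem_Iic.2 le_rfl) hlk).ne heq

theorem pred_le_of_logConcave_of_eq (hpos : ∀ j ≤ N, 0 < p j)
    (hlc : ∀ j, j + 2 ≤ N → p j * p (j + 2) ≤ p (j + 1) ^ 2) {l k : ℕ} (hl : 0 < l) (hlk : l < k)
    (hkN : k ≤ N) (heq : p l = p k) : p (l - 1) ≤ p l := by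
  obtain ⟨l, rfl⟩ : ∃ l', l = l' + 1 := ⟨l - 1, by omega⟩
  by_contra! h
  have hanti : StrictAntiOn p (Set.Icc l N) :=
    strictAntiOn_of_succ_lt Set.ordConnected_Icc fun m _ hm hm' =>
      succ_lt_of_logConcave_of_succ_lt hpos hlc hm.1 hm'.2 h
  exact (hanti ⟨by omega, by omega⟩ ⟨by omega, hkN⟩ hlk).ne' heq

end LogConcave

theorem Svec_div_choose_eq_esymmMean {n : ℕ} (lam : Fin n → ℝ) (j : ℕ) :
    Svec n j lam / n.choose j = (Finset.univ.val.map lam).esymmMean j := by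
  rw [esymmMean, Finset.esymm_map_val, card_map, Finset.card_val, Finset.card_univ,
    Fintype.card_fin, Svec]

theorem SvecZ_natCast_sub_one {n k : ℕ} (lam : Fin n → ℝ) (hk : 1 ≤ k) :
    SvecZ n ((k : ℤ) - 1) lam = Svec n (k - 1) lam := by
  rw [SvecZ, if_pos (by omega)]
  congr
  omega

theorem cast_mul_choose_eq_mul_choose_sub_one {n j : ℕ} (hj : 1 ≤ j) (hjn : j ≤ n) :
    (j : ℝ) * n.choose j = (n - j + 1) * n.choose (j - 1) := by
  obtain ⟨j, rfl⟩ : ∃ j', j = j' + 1 := ⟨j - 1, by omega⟩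
  have := congrArg (Nat.cast : ℕ → ℝ) (Nat.choose_succ_right_eq n j)
  push_cast [Nat.cast_sub (by omega : j ≤ n)] at this
  rw [Nat.add_sub_cancel]
  push_cast
  linear_combination this

theorem mul_le_sub_add_one_mul_of_div_choose_le {n j : ℕ} {a b : ℝ} (hj : 1 ≤ j) (hjn : j ≤ n)
    (h : a / n.choose j ≤ b / n.choose (j - 1)) : j * a ≤ (n - j + 1) * b := by
  have hc : (0 : ℝ) < n.choose j := by exact_mod_cast Nat.choose_pos hjn
  have hc' : (0 : ℝ) < n.choose (j - 1) := by exact_mod_cast Nat.choose_pos (by omega)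
  rw [div_le_div_iff₀ hc hc'] at h
  refine le_of_mul_le_mul_right ?_ hc'
  calc j * a * n.choose (j - 1) = j * (a * n.choose (j - 1)) := by ring
    _ ≤ j * (b * n.choose j) := by gcongr
    _ = (n - j + 1) * b * n.choose (j - 1) := by
        linear_combination b * cast_mul_choose_eq_mul_choose_sub_one hj hjn

theorem mul_choose_mul_le_of_div_choose_pred_le {n i j : ℕ} {a b : ℝ} (hi : 1 ≤ i) (hin : i ≤ n)
    (hj : 1 ≤ j) (hjn : j ≤ n) (h : a / n.choose (i - 1) ≤ b / n.choose (j - 1)) :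
    j * (n - i + 1) * n.choose j * a ≤ i * (n - j + 1) * n.choose i * b := by
  have hc : (0 : ℝ) < n.choose (i - 1) := by exact_mod_cast Nat.choose_pos (by omega)
  have hc' : (0 : ℝ) < n.choose (j - 1) := by exact_mod_cast Nat.choose_pos (by omega)
  have hni : (0 : ℝ) ≤ n - i + 1 := by linarith [(Nat.cast_le (α := ℝ)).2 hin]
  have hnj : (0 : ℝ) ≤ n - j + 1 := by linarith [(Nat.cast_le (α := ℝ)).2 hjn]
  rw [div_le_div_iff₀ hc hc'] at h
  calc j * (n - i + 1) * n.choose j * a = (n - i + 1) * (n - j + 1) * (a * n.choose (j - 1)) := by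
        linear_combination (n - i + 1) * a * cast_mul_choose_eq_mul_choose_sub_one hj hjn
    _ ≤ (n - i + 1) * (n - j + 1) * (b * n.choose (i - 1)) := by gcongr
    _ = i * (n - j + 1) * n.choose i * b := by
        linear_combination -(n - j + 1) * b * cast_mul_choose_eq_mul_choose_sub_one hi hin

theorem maclaurin_coefficient_inequalities_general
    (n k l : ℕ) (hlk : l < k) (hkn : k ≤ n)
    (lam : Fin n → ℝ) (hlam : lam ∈ GardingCone n k)
    (heq : Svec n k lam / (n.choose k : ℝ) = Svec n l lam / (n.choose l : ℝ)) :
    (k : ℝ) * ((n : ℝ) - l + 1) * (n.choose k : ℝ) * SvecZ n ((l : ℤ) - 1) lam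
        ≤ (l : ℝ) * ((n : ℝ) - k + 1) * (n.choose l : ℝ) * SvecZ n ((k : ℤ) - 1) lam
      ∧ (k : ℝ) * Svec n k lam ≤ ((n : ℝ) - k + 1) * SvecZ n ((k : ℤ) - 1) lam := by
  set p := (Finset.univ.val.map lam).esymmMean
  have hp : ∀ j, Svec n j lam / n.choose j = p j := Svec_div_choose_eq_esymmMean lam
  have hpos : ∀ j ≤ k, 0 < p j := by
    rintro (_ | j) hj
    · simp [p, esymmMean_zero]
    · rw [← hp]
      exact div_pos (hlam _ (by omega) hj) (by exact_mod_cast Nat.choose_pos (by omega))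
  have hlc : ∀ j, j + 2 ≤ k → p j * p (j + 2) ≤ p (j + 1) ^ 2 := fun j hj =>
    esymmMean_mul_le_sq _ (by simpa using hj.trans hkn)
  rw [hp, hp] at heq
  have hk_pred : p k ≤ p (k - 1) := le_pred_of_logConcave_of_eq hpos hlc hlk le_rfl heq.symm
  rw [SvecZ_natCast_sub_one (k := k) lam (by omega)]
  refine ⟨?_, mul_le_sub_add_one_mul_of_div_choose_le (by omega) hkn (by rwa [hp, hp])⟩
  rcases Nat.eq_zero_or_pos l with rfl | hl
  · simp [SvecZ]
  have hl_pred : p (l - 1) ≤ p l := pred_le_of_logConcave_of_eq hpos hlc hl hlk le_rfl heq.symm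
  rw [SvecZ_natCast_sub_one (k := l) lam hl]
  exact mul_choose_mul_le_of_div_choose_pred_le hl (by omega) (by omega) hkn
    (by rw [hp, hp]; exact hl_pred.trans (heq.symm.le.trans hk_pred))

/-- If `λ ∈ Γ_k` and `S_k(λ)/C_n^k = S_l(λ)/C_n^l`, then
(i) `k(n−l+1) C_n^k S_{l−1} ≤ l(n−k+1) C_n^l S_{k−1}` (with `S_{−1} := 0`), and
(ii) `k S_k ≤ (n−k+1) S_{k−1}`. -/
theorem maclaurin_coefficient_inequalities
    (n k l : ℕ) (hn : 2 ≤ n) (hlk : l < k) (hkn : k ≤ n)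
    (lam : Fin n → ℝ) (hlam : lam ∈ GardingCone n k)
    (heq : Svec n k lam / (n.choose k : ℝ) = Svec n l lam / (n.choose l : ℝ)) :
    (k : ℝ) * ((n : ℝ) - l + 1) * (n.choose k : ℝ) * SvecZ n ((l : ℤ) - 1) lam
        ≤ (l : ℝ) * ((n : ℝ) - k + 1) * (n.choose l : ℝ) * SvecZ n ((k : ℤ) - 1) lam
      ∧ (k : ℝ) * Svec n k lam ≤ ((n : ℝ) - k + 1) * SvecZ n ((k : ℤ) - 1) lam :=
  maclaurin_coefficient_inequalities_general n k l hlk hkn lam hlam heq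
end
end

section
/- Let n ≥ 1, let k be an integer with 1 ≤ k ≤ n, let Ω ⊂ ℝⁿ be open, and let u ∈ C³(Ω). Let A(u) be the curvature matrix of the graph of u, with entries a_{ij} = ∂_j(u_i/w) where w = √(1+|Du|²). Then for each fixed index i, Σ_{j=1}^{n} ∂_j ( S_k^{ij}(A(u)) ) = 0 at every point of Ω. -/
open scoped BigOperators

noncomputable section

/-- Sum of the k×k principal minors of A (= k-th elementary symmetric function of the
eigenvalues of A); by definition `Smat n 0 A = 1`. -/
def Smat (n k : ℕ) (A : Matrix (Fin n) (Fin n) ℝ) : ℝ :=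
  ∑ s ∈ Finset.powersetCard k (Finset.univ : Finset (Fin n)),
    (A.submatrix (fun i : {a // a ∈ s} => (i : Fin n)) (fun j : {a // a ∈ s} => (j : Fin n))).det

/-- `S_k^{ij}(A) = ∂ S_k(A) / ∂ a_{ij}`. -/
def Sij (n k : ℕ) (A : Matrix (Fin n) (Fin n) ℝ) (i j : Fin n) : ℝ :=
  deriv (fun t : ℝ => Smat n k (A + t • Matrix.single i j (1:ℝ))) 0

/-- Partial derivative `∂f/∂x_i`. -/
def pd (n : ℕ) (f : EuclideanSpace ℝ (Fin n) → ℝ) (i : Fin n)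
    (x : EuclideanSpace ℝ (Fin n)) : ℝ :=
  fderiv ℝ f x (EuclideanSpace.single i 1)

/-- Hessian matrix of `u`: the `(i,j)` entry is `∂_j ∂_i u`. -/
def hess (n : ℕ) (u : EuclideanSpace ℝ (Fin n) → ℝ) (x : EuclideanSpace ℝ (Fin n)) :
    Matrix (Fin n) (Fin n) ℝ :=
  Matrix.of fun i j => pd n (pd n u i) j x

/-- `w = √(1 + |Du|²)`. -/
def wFn (n : ℕ) (u : EuclideanSpace ℝ (Fin n) → ℝ) (x : EuclideanSpace ℝ (Fin n)) : ℝ :=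
  Real.sqrt (1 + ∑ i, (pd n u i x) ^ 2)

/-- The curvature matrix `A(u)` of the graph of `u`, with entries `a_{ij} = ∂_j (u_i / w)`. -/
def curvMat (n : ℕ) (u : EuclideanSpace ℝ (Fin n) → ℝ) (x : EuclideanSpace ℝ (Fin n)) :
    Matrix (Fin n) (Fin n) ℝ :=
  Matrix.of fun i j => pd n (fun y => pd n u i y / wFn n u y) j x

/-! Expanding every principal minor by the Leibniz formula, `S_k^{ij}(A)` is a signed sum of the
products `∏_{t ≠ r} a_{t σ(t)}` over index sets `T`, permutations `σ` of `T` and rows `r = i` with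
`σ(r) = j`. After differentiating in `x_j` and summing over `j`, each term carries a factor
`∂_{σ(r)} a_{t σ(t)}` with `t ≠ r`. Since `a_{ts} = ∂_s v_t` for the `C²` field `v = Du / w`, this
factor is symmetric in `σ(r)` and `σ(t)`, so the terms of `σ` and `σ * swap r t` cancel. -/

open Finset Equiv

theorem Smat_eq_sum_perm (n k : ℕ) (A : Matrix (Fin n) (Fin n) ℝ) :
    Smat n k A = ∑ T ∈ powersetCard k (univ : Finset (Fin n)), ∑ σ : Perm T,
      (Perm.sign σ : ℝ) * ∏ t : T, A t (σ t) := by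
  refine sum_congr rfl fun T _ => ?_
  rw [← Matrix.det_transpose, Matrix.det_apply']
  simp [Matrix.transpose_apply]

theorem Sij_eq_sum_perm (n k : ℕ) (A : Matrix (Fin n) (Fin n) ℝ) (i j : Fin n) :
    Sij n k A i j = ∑ T ∈ powersetCard k (univ : Finset (Fin n)), ∑ σ : Perm T,
      (Perm.sign σ : ℝ) * ∑ r ∈ univ.filter (fun r : T => i = r ∧ j = σ r),
        ∏ t ∈ univ.erase r, A t (σ t) := by
  unfold Sij
  simp only [Smat_eq_sum_perm, Matrix.add_apply, Matrix.smul_apply, Matrix.single_apply,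
    smul_eq_mul]
  simp (disch := fun_prop) only [deriv_fun_sum, deriv_const_mul_field', deriv_fun_finsetProd,
    deriv_const_add', deriv_mul_const_field', deriv_id'']
  simp only [smul_eq_mul, mul_ite, mul_one, mul_zero, ite_self, add_zero, sum_filter]

theorem sum_sign_mul_prod_mul_eq_zero {α : Type*} [Fintype α] [DecidableEq α] {r t : α}
    (hrt : r ≠ t) (c q : α → α → ℝ) (hq : ∀ a b, q a b = q b a) :
    ∑ σ : Perm α, (Perm.sign σ : ℝ) * ((∏ s ∈ (univ.erase r).erase t, c s (σ s)) * q (σ t) (σ r))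
      = 0 := by
  set F : Perm α → ℝ := fun σ =>
    (Perm.sign σ : ℝ) * ((∏ s ∈ (univ.erase r).erase t, c s (σ s)) * q (σ t) (σ r))
  have hF : ∀ σ, F (σ * swap r t) = -F σ := by
    intro σ
    have hprod : ∏ s ∈ (univ.erase r).erase t, c s ((σ * swap r t) s)
        = ∏ s ∈ (univ.erase r).erase t, c s (σ s) := by
      refine prod_congr rfl fun s hs => ?_
      rw [mem_erase, mem_erase] at hs
      rw [Perm.mul_apply, swap_apply_of_ne_of_ne hs.2.1 hs.1]
    simp only [F, hprod]
    simp only [Perm.sign_mul, Perm.sign_swap hrt, Perm.mul_apply, swap_apply_left,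
      swap_apply_right, hq (σ r)]
    push_cast
    ring
  have := Equiv.sum_comp (Equiv.mulRight (swap r t)) F
  simp only [coe_mulRight, hF, sum_neg_distrib] at this
  linarith

section PartialDerivatives

variable {n : ℕ} {x : EuclideanSpace ℝ (Fin n)}

theorem pd_fun_sum {ι : Type*} (s : Finset ι) {f : ι → EuclideanSpace ℝ (Fin n) → ℝ}
    (hf : ∀ a ∈ s, DifferentiableAt ℝ (f a) x) (j : Fin n) :
    pd n (fun y => ∑ a ∈ s, f a y) j x = ∑ a ∈ s, pd n (f a) j x := by
  simp [pd, fderiv_fun_sum hf]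

theorem pd_const_mul (c : ℝ) (f : EuclideanSpace ℝ (Fin n) → ℝ) (j : Fin n) :
    pd n (fun y => c * f y) j x = c * pd n f j x := by
  change fderiv ℝ (c • f) x _ = c * fderiv ℝ f x _
  rw [fderiv_const_smul_field]
  rfl

theorem pd_fun_finsetProd {ι : Type*} [DecidableEq ι] (s : Finset ι)
    {f : ι → EuclideanSpace ℝ (Fin n) → ℝ} (hf : ∀ a ∈ s, DifferentiableAt ℝ (f a) x)
    (j : Fin n) :
    pd n (fun y => ∏ a ∈ s, f a y) j x = ∑ a ∈ s, (∏ b ∈ s.erase a, f b x) * pd n (f a) j x := by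
  simp [pd, fderiv_finsetProd hf]

theorem contDiffAt_pd {m : WithTop ℕ∞} {f : EuclideanSpace ℝ (Fin n) → ℝ}
    (hf : ContDiffAt ℝ (m + 1) f x) (j : Fin n) : ContDiffAt ℝ m (pd n f j) x :=
  (hf.fderiv_right le_rfl).clm_apply contDiffAt_const

theorem pd_pd_eq_fderiv_fderiv {f : EuclideanSpace ℝ (Fin n) → ℝ} (hf : ContDiffAt ℝ 2 f x)
    (i j : Fin n) :
    pd n (pd n f i) j x
      = fderiv ℝ (fderiv ℝ f) x (EuclideanSpace.single j 1) (EuclideanSpace.single i 1) := by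
  have hdf : DifferentiableAt ℝ (fderiv ℝ f) x :=
    (hf.fderiv_right (m := 1) (by norm_num)).differentiableAt one_ne_zero
  change fderiv ℝ (fun y => fderiv ℝ f y (EuclideanSpace.single i 1)) x _ = _
  simp [fderiv_clm_apply hdf (differentiableAt_const _)]

theorem pd_pd_comm {f : EuclideanSpace ℝ (Fin n) → ℝ} (hf : ContDiffAt ℝ 2 f x) (i j : Fin n) :
    pd n (pd n f i) j x = pd n (pd n f j) i x := by
  rw [pd_pd_eq_fderiv_fderiv hf, pd_pd_eq_fderiv_fderiv hf]
  exact hf.isSymmSndFDerivAt (by simp) _ _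

end PartialDerivatives

section DivergenceFree

variable {n : ℕ} {x : EuclideanSpace ℝ (Fin n)}
  {M : EuclideanSpace ℝ (Fin n) → Matrix (Fin n) (Fin n) ℝ}

theorem sum_sign_mul_pd_prod_erase_eq_zero
    (hM : ∀ r s, DifferentiableAt ℝ (fun y => M y r s) x)
    (hsymm : ∀ r s j, pd n (fun y => M y r s) j x = pd n (fun y => M y r j) s x)
    {α : Type*} [Fintype α] [DecidableEq α] (e : α → Fin n) (r : α) :
    ∑ σ : Perm α, (Perm.sign σ : ℝ) *
      pd n (fun y => ∏ t ∈ univ.erase r, M y (e t) (e (σ t))) (e (σ r)) x = 0 := by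
  simp only [pd_fun_finsetProd _ (fun t _ => hM _ _), mul_sum]
  rw [sum_comm]
  refine sum_eq_zero fun t ht => ?_
  exact sum_sign_mul_prod_mul_eq_zero (mem_erase.1 ht).1.symm (fun a b => M x (e a) (e b))
    (fun a b => pd n (fun y => M y (e t) (e a)) (e b) x) (fun a b => hsymm _ _ _)

theorem sum_pd_Sij_eq_zero_of_pd_comm
    (hM : ∀ r s, DifferentiableAt ℝ (fun y => M y r s) x)
    (hsymm : ∀ r s j, pd n (fun y => M y r s) j x = pd n (fun y => M y r j) s x)
    (k : ℕ) (i : Fin n) :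
    ∑ j, pd n (fun y => Sij n k (M y) i j) j x = 0 := by
  simp only [Sij_eq_sum_perm]
  simp (disch := fun_prop) only [pd_fun_sum, pd_const_mul]
  rw [sum_comm]
  refine sum_eq_zero fun T _ => ?_
  rw [sum_comm]
  -- the sum over `j` collapses onto `j = σ r`
  simp only [← mul_sum, sum_filter, ite_and]
  simp_rw [sum_comm (s := (univ : Finset (Fin n))), sum_ite_irrel, sum_ite_eq', mem_univ,
    if_true, sum_const_zero, mul_sum, mul_ite, mul_zero]
  rw [sum_comm]
  refine sum_eq_zero fun r _ => ?_
  rw [sum_ite_irrel, sum_const_zero]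
  split_ifs
  exacts [sum_sign_mul_pd_prod_erase_eq_zero hM hsymm _ r, rfl]

theorem sum_pd_Sij_jacobian_eq_zero {v : Fin n → EuclideanSpace ℝ (Fin n) → ℝ}
    (hv : ∀ r, ContDiffAt ℝ 2 (v r) x) (k : ℕ) (i : Fin n) :
    ∑ j, pd n (fun y => Sij n k (Matrix.of fun r s => pd n (v r) s y) i j) j x = 0 :=
  sum_pd_Sij_eq_zero_of_pd_comm
    (fun r s => (contDiffAt_pd (m := 1) (hv r) s).differentiableAt one_ne_zero)
    (fun r s j => pd_pd_comm (hv r) s j) k i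

end DivergenceFree

theorem wFn_pos {n : ℕ} (u : EuclideanSpace ℝ (Fin n) → ℝ) (y : EuclideanSpace ℝ (Fin n)) :
    0 < wFn n u y :=
  Real.sqrt_pos.mpr (by positivity)

theorem contDiffAt_wFn {n : ℕ} {x : EuclideanSpace ℝ (Fin n)} {m : WithTop ℕ∞}
    {u : EuclideanSpace ℝ (Fin n) → ℝ} (hu : ContDiffAt ℝ (m + 1) u x) :
    ContDiffAt ℝ m (wFn n u) x :=
  (Real.contDiffAt_sqrt (by positivity)).comp x
    (contDiffAt_const.add (ContDiffAt.sum fun i _ => (contDiffAt_pd hu i).pow 2))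

theorem Skij_curvature_divergence_free_general
    (n k : ℕ)
    (Ω : Set (EuclideanSpace ℝ (Fin n))) (hopen : IsOpen Ω)
    (u : EuclideanSpace ℝ (Fin n) → ℝ) (hu : ContDiffOn ℝ 3 u Ω) (i : Fin n) :
    ∀ x ∈ Ω, ∑ j : Fin n, pd n (fun y => Sij n k (curvMat n u y) i j) j x = 0 := by
  intro x hx
  have hu3 : ContDiffAt ℝ (2 + 1) u x := hu.contDiffAt (hopen.mem_nhds hx)
  exact sum_pd_Sij_jacobian_eq_zero
    (fun r => (contDiffAt_pd hu3 r).div (contDiffAt_wFn hu3) (wFn_pos u x).ne') k i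

/-- For `u ∈ C³(Ω)` and each fixed `i`, the vector field `(S_k^{i1}(A(u)), …, S_k^{in}(A(u)))`
built from the curvature matrix of the graph of `u` is divergence free on the open set `Ω`. -/
theorem Skij_curvature_divergence_free
    (n k : ℕ) (hn : 1 ≤ n) (hk1 : 1 ≤ k) (hkn : k ≤ n)
    (Ω : Set (EuclideanSpace ℝ (Fin n))) (hopen : IsOpen Ω)
    (u : EuclideanSpace ℝ (Fin n) → ℝ) (hu : ContDiffOn ℝ 3 u Ω) (i : Fin n) :
    ∀ x ∈ Ω, ∑ j : Fin n, pd n (fun y => Sij n k (curvMat n u y) i j) j x = 0 :=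
  Skij_curvature_divergence_free_general n k Ω hopen u hu i
end
end
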